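/- arXiv:1901.05752 — 2 statements merged into one kernel-verified Lean document; each statement's English description precedes it below -/
import Mathlib

section
/- Let the problem have Property (P). Then the problem is strongly polynomially tractable if and only if it is polynomially tractable. -/
open Filter Real Set

/-- Information complexity: the number of multi-indices `(j₁,…,j_d) ∈ ℕ^d`
(here 0-indexed, so `Λ k j` stands for `λ(k+1, j+1)`) whose eigenvalue product exceeds `ε²`. -/
noncomputable def infoCount (Λ : ℕ → ℕ → ℝ) (d : ℕ) (ε : ℝ) : ℕ :=
  Nat.card {j : Fin d → ℕ | ε ^ 2 < ∏ k : Fin d, Λ k.val (j k)}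

/-- Strong polynomial tractability. -/
def IsSPT (Λ : ℕ → ℕ → ℝ) : Prop :=
  ∃ C p : ℝ, 0 ≤ C ∧ 0 ≤ p ∧ ∀ d : ℕ, 1 ≤ d → ∀ ε : ℝ, ε ∈ Set.Ioo (0 : ℝ) 1 →
    (infoCount Λ d ε : ℝ) ≤ C * ε ^ (-p)

/-- The exponent `p*` of strong polynomial tractability. -/
noncomputable def sptExponent (Λ : ℕ → ℕ → ℝ) : ℝ :=
  sInf {p : ℝ | 0 ≤ p ∧ ∃ C : ℝ, 0 ≤ C ∧ ∀ d : ℕ, 1 ≤ d → ∀ ε : ℝ, ε ∈ Set.Ioo (0 : ℝ) 1 →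
    (infoCount Λ d ε : ℝ) ≤ C * ε ^ (-p)}

/-- Polynomial tractability. -/
def IsPT (Λ : ℕ → ℕ → ℝ) : Prop :=
  ∃ C p q : ℝ, 0 ≤ C ∧ 0 ≤ p ∧ 0 ≤ q ∧ ∀ d : ℕ, 1 ≤ d → ∀ ε : ℝ, ε ∈ Set.Ioo (0 : ℝ) 1 →
    (infoCount Λ d ε : ℝ) ≤ C * (d : ℝ) ^ q * ε ^ (-p)

/-- Quasi-polynomial tractability. -/
def IsQPT (Λ : ℕ → ℕ → ℝ) : Prop :=
  ∃ C t : ℝ, 0 < C ∧ 0 < t ∧ ∀ d : ℕ, 1 ≤ d → ∀ ε : ℝ, ε ∈ Set.Ioo (0 : ℝ) 1 →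
    (infoCount Λ d ε : ℝ) ≤ C * Real.exp (t * (1 + Real.log d) * (1 + Real.log ε⁻¹))

/-- The exponent `t*` of quasi-polynomial tractability. -/
noncomputable def qptExponent (Λ : ℕ → ℕ → ℝ) : ℝ :=
  sInf {t : ℝ | 0 < t ∧ ∃ C : ℝ, 0 < C ∧ ∀ d : ℕ, 1 ≤ d → ∀ ε : ℝ, ε ∈ Set.Ioo (0 : ℝ) 1 →
    (infoCount Λ d ε : ℝ) ≤ C * Real.exp (t * (1 + Real.log d) * (1 + Real.log ε⁻¹))}

/-- The filter describing `ε⁻¹ + d → ∞` over pairs `(ε, d)` with `ε ∈ (0,1)` and `d ≥ 1`. -/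
noncomputable def wtFilter : Filter (ℝ × ℕ) :=
  (Filter.comap (fun p : ℝ × ℕ => p.1⁻¹ + (p.2 : ℝ)) Filter.atTop) ⊓
    Filter.principal {p : ℝ × ℕ | p.1 ∈ Set.Ioo (0 : ℝ) 1 ∧ 1 ≤ p.2}

/-- `(s,t)`-weak tractability: `ln n(ε,d) / (ε^{-s} + d^t) → 0` as `ε⁻¹ + d → ∞`. -/
def IsWT (Λ : ℕ → ℕ → ℝ) (s t : ℝ) : Prop :=
  Filter.Tendsto
    (fun p : ℝ × ℕ => Real.log (infoCount Λ p.2 p.1) / (p.1 ^ (-s) + (p.2 : ℝ) ^ t))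
    wtFilter (nhds 0)

/-- Uniform weak tractability. -/
def IsUWT (Λ : ℕ → ℕ → ℝ) : Prop := ∀ s t : ℝ, 0 < s → 0 < t → IsWT Λ s t

/-- The problem suffers from the curse of dimensionality. -/
def SuffersCurse (Λ : ℕ → ℕ → ℝ) : Prop :=
  ∃ C ε₀ α : ℝ, 0 < C ∧ 0 < ε₀ ∧ 0 < α ∧ ∀ ε : ℝ, 0 < ε → ε ≤ ε₀ →
    {d : ℕ | C * (1 + α) ^ d ≤ (infoCount Λ d ε : ℝ)}.Infinite

/-- Condition (3) of Property (P) for a given `τ > 0`: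
`H(k,τ) = ∑_{j≥2} (λ(k,j)/λ(k,2))^τ` is finite for each `k` and
`sup_k H(k,τ) = H(1,τ)` (equivalently `H(k,τ) ≤ H(1,τ)` for all `k`). -/
def Cond3 (Λ : ℕ → ℕ → ℝ) (τ : ℝ) : Prop :=
  0 < τ ∧ (∀ k, Summable fun j : ℕ => (Λ k (j + 1) / Λ k 1) ^ τ) ∧
    ∀ k, (∑' j : ℕ, (Λ k (j + 1) / Λ k 1) ^ τ) ≤ ∑' j : ℕ, (Λ 0 (j + 1) / Λ 0 1) ^ τ

/-- `τ₀`: the infimum of all `τ` satisfying Condition (3). -/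
noncomputable def tau0 (Λ : ℕ → ℕ → ℝ) : ℝ := sInf {τ : ℝ | Cond3 Λ τ}

/-- Property (P): each sequence `λ(k,·)` is nonincreasing and nonnegative with `λ(k,1) = 1`
and `λ(k,2) > 0`, `h_k = λ(k,2)` is nonincreasing, and Condition (3) holds for some `τ > 0`. -/
structure PropertyP (Λ : ℕ → ℕ → ℝ) : Prop where
  nonneg : ∀ k j, 0 ≤ Λ k j
  anti : ∀ k, Antitone (Λ k)
  first : ∀ k, Λ k 0 = 1
  second_pos : ∀ k, 0 < Λ k 1
  h_anti : Antitone fun k => Λ k 1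
  cond3 : ∃ τ : ℝ, Cond3 Λ τ

/-!
SPT trivially implies PT. Conversely, fix `τ'` satisfying Condition (3). Weighting each
multi-index `j` by `∏ₖ λ(k, jₖ)^τ`, Markov's inequality and Condition (3) give, for `τ ≥ τ'`,
`n(ε, d) ≤ ε^(-2τ) ∏ₖ (1 + h_k^τ H(1, τ')) ≤ ε^(-2τ) exp (H(1, τ') ∑ₖ h_k^τ)`,
so strong polynomial tractability follows once `∑ₖ h_k^τ < ∞` for some `τ`.
That decay of `h_k` is forced by PT: as `h` is nonincreasing, once `ε² < h_n^m` all `C(n, m)`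
multi-indices with `m` entries equal to `2` among the first `n` coordinates count in `n(ε, n)`,
so `n^m ≲ C(n, m) ≤ C n^q h_n^(-pm/2)`, and choosing `m > q` gives `n h_n^(pm/2) = O(1)`.
-/

section ProductSums

variable {ι : Type*} [Fintype ι] {f : ι → ℕ → ℝ}

theorem sum_prod_le_prod_tsum (hf₀ : ∀ i n, 0 ≤ f i n) (hf : ∀ i, Summable (f i))
    (s : Finset (ι → ℕ)) : ∑ j ∈ s, ∏ i, f i (j i) ≤ ∏ i, ∑' n, f i n := by
  classical
  calc ∑ j ∈ s, ∏ i, f i (j i)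
      ≤ ∑ j ∈ Fintype.piFinset fun i => s.image (· i), ∏ i, f i (j i) :=
        Finset.sum_le_sum_of_subset_of_nonneg
          (fun j hj => Fintype.mem_piFinset.2 fun i => Finset.mem_image_of_mem _ hj)
          fun j _ _ => Finset.prod_nonneg fun i _ => hf₀ i _
    _ = ∏ i, ∑ n ∈ s.image (· i), f i n := (Finset.prod_univ_sum _ _).symm
    _ ≤ ∏ i, ∑' n, f i n :=
        Finset.prod_le_prod (fun i _ => Finset.sum_nonneg fun n _ => hf₀ i n)
          fun i _ => (hf i).sum_le_tsum _ fun n _ => hf₀ i n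

theorem card_mul_le_prod_tsum_of_subset (hf₀ : ∀ i n, 0 ≤ f i n) (hf : ∀ i, Summable (f i))
    {c : ℝ} {s : Finset (ι → ℕ)} (hs : (s : Set (ι → ℕ)) ⊆ {j | c < ∏ i, f i (j i)}) :
    s.card * c ≤ ∏ i, ∑' n, f i n :=
  calc s.card * c = ∑ _j ∈ s, c := by rw [Finset.sum_const, nsmul_eq_mul]
    _ ≤ ∑ j ∈ s, ∏ i, f i (j i) := Finset.sum_le_sum fun j hj => (hs hj).le
    _ ≤ ∏ i, ∑' n, f i n := sum_prod_le_prod_tsum hf₀ hf s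

theorem finite_setOf_lt_prod (hf₀ : ∀ i n, 0 ≤ f i n) (hf : ∀ i, Summable (f i))
    {c : ℝ} (hc : 0 < c) : {j : ι → ℕ | c < ∏ i, f i (j i)}.Finite := by
  by_contra hinf
  set P := ∏ i, ∑' n, f i n
  obtain ⟨s, hs, hcard⟩ := Set.Infinite.exists_subset_card_eq hinf (⌈P / c⌉₊ + 1)
  have hle := card_mul_le_prod_tsum_of_subset hf₀ hf hs
  rw [hcard, ← le_div_iff₀ hc] at hle
  push_cast at hle
  linarith [Nat.le_ceil (P / c)]

theorem natCard_setOf_lt_prod_mul_le (hf₀ : ∀ i n, 0 ≤ f i n) (hf : ∀ i, Summable (f i))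
    {c : ℝ} (hc : 0 < c) :
    Nat.card {j : ι → ℕ | c < ∏ i, f i (j i)} * c ≤ ∏ i, ∑' n, f i n := by
  have hfin := finite_setOf_lt_prod hf₀ hf hc
  rw [Nat.card_coe_set_eq, Set.ncard_eq_toFinset_card _ hfin]
  exact card_mul_le_prod_tsum_of_subset hf₀ hf (by simp)

end ProductSums

theorem Nat.pow_le_two_mul_pow_mul_choose {n m : ℕ} (h : 2 * m ≤ n) :
    n ^ m ≤ (2 * m) ^ m * n.choose m :=
  calc n ^ m ≤ (2 * (n + 1 - m)) ^ m := Nat.pow_le_pow_left (by omega) m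
    _ = 2 ^ m * (n + 1 - m) ^ m := mul_pow ..
    _ ≤ 2 ^ m * (m.factorial * n.choose m) := by
        gcongr
        rw [← Nat.descFactorial_eq_factorial_mul_choose]
        exact n.pow_sub_le_descFactorial m
    _ ≤ 2 ^ m * (m ^ m * n.choose m) := by gcongr; exact m.factorial_le_pow
    _ = (2 * m) ^ m * n.choose m := by ring

namespace PropertyP

variable {Λ : ℕ → ℕ → ℝ} (hP : PropertyP Λ)
include hP

theorem le_one (k j : ℕ) : Λ k j ≤ 1 :=
  hP.first k ▸ hP.anti k (Nat.zero_le j)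

theorem rpow_succ_le {τs τ : ℝ} (hτs : 0 < τs) (hτ : τs ≤ τ) (k n : ℕ) :
    Λ k (n + 1) ^ τ ≤ Λ k 1 ^ τ * (Λ k (n + 1) / Λ k 1) ^ τs := by
  have h₁ := hP.second_pos k
  have hr₀ : 0 ≤ Λ k (n + 1) / Λ k 1 := div_nonneg (hP.nonneg _ _) h₁.le
  have hr₁ : Λ k (n + 1) / Λ k 1 ≤ 1 := (div_le_one h₁).2 (hP.anti k (by omega))
  calc Λ k (n + 1) ^ τ = Λ k 1 ^ τ * (Λ k (n + 1) / Λ k 1) ^ τ := by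
        rw [← Real.mul_rpow h₁.le hr₀, mul_div_cancel₀ _ h₁.ne']
    _ ≤ Λ k 1 ^ τ * (Λ k (n + 1) / Λ k 1) ^ τs :=
        mul_le_mul_of_nonneg_left (Real.rpow_le_rpow_of_exponent_ge' hr₀ hr₁ hτs.le hτ)
          (Real.rpow_nonneg h₁.le τ)

theorem summable_rpow {τs τ : ℝ} (hτs : Cond3 Λ τs) (hτ : τs ≤ τ) (k : ℕ) :
    Summable fun n => Λ k n ^ τ := by
  rw [← summable_nat_add_iff 1]
  exact ((hτs.2.1 k).mul_left (Λ k 1 ^ τ)).of_nonneg_of_le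
    (fun n => Real.rpow_nonneg (hP.nonneg _ _) τ) (hP.rpow_succ_le hτs.1 hτ k)

theorem tsum_rpow_le {τs τ : ℝ} (hτs : Cond3 Λ τs) (hτ : τs ≤ τ) (k : ℕ) :
    ∑' n, Λ k n ^ τ ≤ 1 + Λ k 1 ^ τ * ∑' n, (Λ 0 (n + 1) / Λ 0 1) ^ τs := by
  rw [(hP.summable_rpow hτs hτ k).tsum_eq_zero_add, hP.first, Real.one_rpow]
  gcongr 1 + ?_
  calc ∑' n, Λ k (n + 1) ^ τ ≤ ∑' n, Λ k 1 ^ τ * (Λ k (n + 1) / Λ k 1) ^ τs :=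
        ((summable_nat_add_iff 1).2 (hP.summable_rpow hτs hτ k)).tsum_le_tsum
          (hP.rpow_succ_le hτs.1 hτ k) ((hτs.2.1 k).mul_left _)
    _ ≤ Λ k 1 ^ τ * ∑' n, (Λ 0 (n + 1) / Λ 0 1) ^ τs := by
        rw [tsum_mul_left]
        exact mul_le_mul_of_nonneg_left (hτs.2.2 k) (Real.rpow_nonneg (hP.nonneg _ _) τ)

theorem setOf_sq_lt_prod_eq_setOf_rpow {τ : ℝ} (hτ : 0 < τ) (d : ℕ) (ε : ℝ) :
    {j : Fin d → ℕ | ε ^ 2 < ∏ k : Fin d, Λ k (j k)} =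
      {j | (ε ^ 2) ^ τ < ∏ k : Fin d, Λ k (j k) ^ τ} := by
  ext j
  show ε ^ 2 < _ ↔ (ε ^ 2) ^ τ < _
  rw [Real.finsetProd_rpow _ _ (fun k _ => hP.nonneg _ _),
    Real.rpow_lt_rpow_iff (sq_nonneg ε) (Finset.prod_nonneg fun k _ => hP.nonneg _ _) hτ]

theorem finite_setOf_sq_lt_prod (d : ℕ) {ε : ℝ} (hε : 0 < ε) :
    {j : Fin d → ℕ | ε ^ 2 < ∏ k : Fin d, Λ k (j k)}.Finite := by
  obtain ⟨τ, hτ⟩ := hP.cond3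
  rw [hP.setOf_sq_lt_prod_eq_setOf_rpow hτ.1]
  exact finite_setOf_lt_prod (f := fun (k : Fin d) n => Λ k n ^ τ)
    (fun k n => Real.rpow_nonneg (hP.nonneg _ _) τ)
    (fun k => hP.summable_rpow hτ le_rfl k) (by positivity)

theorem infoCount_mul_rpow_le {τs τ : ℝ} (hτs : Cond3 Λ τs) (hτ : τs ≤ τ) (d : ℕ) {ε : ℝ}
    (hε : 0 < ε) : infoCount Λ d ε * (ε ^ 2) ^ τ ≤ ∏ k : Fin d, ∑' n, Λ k n ^ τ := by
  rw [infoCount, hP.setOf_sq_lt_prod_eq_setOf_rpow (hτs.1.trans_le hτ)]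
  exact natCard_setOf_lt_prod_mul_le (f := fun (k : Fin d) n => Λ k n ^ τ)
    (fun k n => Real.rpow_nonneg (hP.nonneg _ _) τ)
    (fun k => hP.summable_rpow hτs hτ k) (by positivity)

theorem choose_le_infoCount {d m : ℕ} {x ε : ℝ} (hx : 0 ≤ x) (hxΛ : ∀ k < d, x ≤ Λ k 1)
    (hε : 0 < ε) (hεx : ε ^ 2 < x ^ m) : d.choose m ≤ infoCount Λ d ε := by
  classical
  let T := {j : Fin d → ℕ | ε ^ 2 < ∏ k : Fin d, Λ k (j k)}
  have : Finite T := hP.finite_setOf_sq_lt_prod d hε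
  let indicator (S : Finset (Fin d)) (k : Fin d) : ℕ := if k ∈ S then 1 else 0
  have indicator_mem (S : Finset.powersetCard m (Finset.univ : Finset (Fin d))) :
      indicator S ∈ T := by
    have hS := Finset.mem_powersetCard.1 S.2
    have hprod : ∏ k : Fin d, Λ k (indicator S k) = ∏ k ∈ S.1, Λ k 1 := by
      simp [indicator, apply_ite, hP.first, Finset.prod_ite_mem]
    calc ε ^ 2 < x ^ m := hεx
      _ = ∏ _k ∈ S.1, x := by rw [Finset.prod_const, hS.2]
      _ ≤ ∏ k ∈ S.1, Λ k 1 := Finset.prod_le_prod (fun _ _ => hx) fun k _ => hxΛ k k.2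
      _ = _ := hprod.symm
  have indicator_injective : Function.Injective indicator := by
    intro S S' h
    ext k
    have := congrFun h k
    by_cases hk : k ∈ S <;> by_cases hk' : k ∈ S' <;> simp_all [indicator]
  calc d.choose m = Nat.card (Finset.powersetCard m (Finset.univ : Finset (Fin d))) := by
        simp
    _ ≤ Nat.card T := Nat.card_le_card_of_injective (fun S => ⟨indicator S, indicator_mem S⟩)
        fun S S' h => Subtype.ext (indicator_injective (congrArg Subtype.val h))

theorem choose_mul_rpow_le_of_infoCount_le {C p q : ℝ}
    (hbound : ∀ d : ℕ, 1 ≤ d → ∀ ε ∈ Ioo (0 : ℝ) 1,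
      (infoCount Λ d ε : ℝ) ≤ C * (d : ℝ) ^ q * ε ^ (-p)) (m k : ℕ) :
    ((k + 1).choose m : ℝ) * Λ k 1 ^ (p * m / 2) ≤ 2 ^ p * (C * ((k + 1 : ℕ) : ℝ) ^ q) := by
  set h := Λ k 1
  have h₀ : 0 < h := hP.second_pos k
  -- `ε` is chosen so that every product of `m` of the `λ(k', 2)`, `k' ≤ k`, exceeds `ε²`.
  set ε := h ^ (m / 2 : ℝ) / 2
  have hhm : h ^ (m / 2 : ℝ) ≤ 1 := Real.rpow_le_one h₀.le (hP.le_one k 1) (by positivity)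
  have hε₀ : 0 < ε := by positivity
  have hεh : ε ^ 2 < h ^ m := by
    have : (h ^ (m / 2 : ℝ)) ^ 2 = h ^ m := by
      rw [← Real.rpow_mul_natCast h₀.le, ← Real.rpow_natCast]
      ring_nf
    rw [div_pow, this]
    linarith [pow_pos h₀ m]
  have hεp : h ^ (p * m / 2) = 2 ^ p * ε ^ p := by
    rw [Real.div_rpow (by positivity) zero_le_two, ← Real.rpow_mul h₀.le]
    field_simp
  have hlow : (k + 1).choose m ≤ infoCount Λ (k + 1) ε :=
    hP.choose_le_infoCount h₀.le (fun k' hk' => hP.h_anti (Nat.lt_succ_iff.1 hk')) hε₀ hεh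
  have hup := hbound (k + 1) (by omega) ε ⟨hε₀, show h ^ (m / 2 : ℝ) / 2 < 1 by linarith⟩
  rw [Real.rpow_neg hε₀.le, ← div_eq_mul_inv, le_div_iff₀ (by positivity)] at hup
  rw [hεp, mul_left_comm]
  exact mul_le_mul_of_nonneg_left
    ((mul_le_mul_of_nonneg_right (Nat.cast_le.2 hlow) (by positivity)).trans hup) (by positivity)

theorem succ_mul_rpow_le_of_infoCount_le {C p q : ℝ}
    (hbound : ∀ d : ℕ, 1 ≤ d → ∀ ε ∈ Ioo (0 : ℝ) 1,
      (infoCount Λ d ε : ℝ) ≤ C * (d : ℝ) ^ q * ε ^ (-p))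
    {m k : ℕ} (hqm : q + 1 ≤ m) (hkm : 2 * m ≤ k + 1) :
    ((k : ℝ) + 1) * Λ k 1 ^ (p * m / 2) ≤ (2 * m) ^ m * 2 ^ p * C := by
  set n : ℕ := k + 1
  have hnq : (0 : ℝ) < (n : ℝ) ^ q := by positivity
  have hpow : (n : ℝ) * (n : ℝ) ^ q ≤ (n : ℝ) ^ m := by
    rw [mul_comm, ← Real.rpow_add_one (by positivity), ← Real.rpow_natCast]
    exact Real.rpow_le_rpow_of_exponent_le (by simp [n]) hqm
  have hbinom : (n : ℝ) ^ m ≤ (2 * m) ^ m * n.choose m := by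
    exact_mod_cast Nat.pow_le_two_mul_pow_mul_choose hkm
  rw [show (k : ℝ) + 1 = n by simp [n]]
  refine le_of_mul_le_mul_right ?_ hnq
  calc (n : ℝ) * Λ k 1 ^ (p * m / 2) * (n : ℝ) ^ q
      = (n * n ^ q) * Λ k 1 ^ (p * m / 2) := by ring
    _ ≤ ((2 * m) ^ m * n.choose m) * Λ k 1 ^ (p * m / 2) :=
        mul_le_mul_of_nonneg_right (hpow.trans hbinom) (Real.rpow_nonneg (hP.nonneg _ _) _)
    _ = (2 * m) ^ m * (n.choose m * Λ k 1 ^ (p * m / 2)) := by ring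
    _ ≤ (2 * m) ^ m * (2 ^ p * (C * (n : ℝ) ^ q)) :=
        mul_le_mul_of_nonneg_left (hP.choose_mul_rpow_le_of_infoCount_le hbound m k)
          (by positivity)
    _ = (2 * m) ^ m * 2 ^ p * C * (n : ℝ) ^ q := by ring

theorem exists_succ_mul_rpow_le_of_isPT (hPT : IsPT Λ) :
    ∃ C β : ℝ, 0 < β ∧ ∀ k : ℕ, ((k : ℝ) + 1) * Λ k 1 ^ β ≤ C := by
  obtain ⟨C, p, q, -, hp, -, hbound⟩ := hPT
  set m : ℕ := ⌈q⌉₊ + 1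
  have hqm : q + 1 ≤ m := by push_cast [m]; linarith [Nat.le_ceil q]
  refine ⟨max (2 * m) ((2 * m) ^ m * 2 ^ p * C), p * m / 2 + 1, by positivity, fun k => ?_⟩
  have h₀ := hP.second_pos k
  have h₁ := hP.le_one k 1
  calc ((k : ℝ) + 1) * Λ k 1 ^ (p * m / 2 + 1) ≤ ((k : ℝ) + 1) * Λ k 1 ^ (p * m / 2) :=
        mul_le_mul_of_nonneg_left (Real.rpow_le_rpow_of_exponent_ge h₀ h₁ (by linarith))
          (by positivity)
    _ ≤ _ := by
      rcases lt_or_ge (k + 1) (2 * m) with hsmall | hlarge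
      · refine le_max_of_le_left ?_
        calc ((k : ℝ) + 1) * Λ k 1 ^ (p * m / 2) ≤ (k : ℝ) + 1 :=
              mul_le_of_le_one_right (by positivity) (Real.rpow_le_one h₀.le h₁ (by positivity))
          _ ≤ 2 * m := by exact_mod_cast hsmall.le
      · exact le_max_of_le_right (hP.succ_mul_rpow_le_of_infoCount_le hbound hqm hlarge)

theorem exists_summable_rpow_second_of_isPT (hPT : IsPT Λ) :
    ∃ τ₁ : ℝ, ∀ τ, τ₁ ≤ τ → Summable fun k => Λ k 1 ^ τ := by
  obtain ⟨C, β, hβ, hC⟩ := hP.exists_succ_mul_rpow_le_of_isPT hPT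
  refine ⟨2 * β, fun τ hτ => ?_⟩
  have hmaj : Summable fun k : ℕ => C ^ 2 * (((k + 1 : ℕ) : ℝ) ^ 2)⁻¹ :=
    ((summable_nat_add_iff 1).2 (Real.summable_nat_pow_inv.2 one_lt_two)).mul_left _
  refine hmaj.of_nonneg_of_le (fun k => Real.rpow_nonneg (hP.nonneg _ _) _) fun k => ?_
  have h₀ := hP.second_pos k
  have hk : (0 : ℝ) < k + 1 := by positivity
  calc Λ k 1 ^ τ ≤ Λ k 1 ^ (2 * β) := Real.rpow_le_rpow_of_exponent_ge h₀ (hP.le_one k 1) hτ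
    _ = (Λ k 1 ^ β) ^ 2 := by rw [← Real.rpow_natCast, ← Real.rpow_mul h₀.le]; ring_nf
    _ ≤ (C / (k + 1)) ^ 2 := by
        gcongr
        rw [le_div_iff₀ hk]
        linarith [hC k]
    _ = C ^ 2 * (((k + 1 : ℕ) : ℝ) ^ 2)⁻¹ := by push_cast; rw [div_pow, div_eq_mul_inv]

theorem infoCount_le_exp_mul_rpow {τs τ : ℝ} (hτs : Cond3 Λ τs) (hτ : τs ≤ τ)
    (hsum : Summable fun k => Λ k 1 ^ τ) (d : ℕ) {ε : ℝ} (hε : 0 < ε) :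
    (infoCount Λ d ε : ℝ) ≤
      exp ((∑' n, (Λ 0 (n + 1) / Λ 0 1) ^ τs) * ∑' k, Λ k 1 ^ τ) * ε ^ (-(2 * τ)) := by
  set H := ∑' n, (Λ 0 (n + 1) / Λ 0 1) ^ τs
  have hH : 0 ≤ H :=
    tsum_nonneg fun n => Real.rpow_nonneg (div_nonneg (hP.nonneg _ _) (hP.second_pos 0).le) _
  have hprod : ∏ k : Fin d, ∑' n, Λ k n ^ τ ≤ exp (H * ∑' k, Λ k 1 ^ τ) :=
    calc ∏ k : Fin d, ∑' n, Λ k n ^ τ ≤ ∏ k : Fin d, (1 + Λ k 1 ^ τ * H) :=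
          Finset.prod_le_prod (fun k _ => tsum_nonneg fun n => Real.rpow_nonneg (hP.nonneg _ _) _)
            fun k _ => hP.tsum_rpow_le hτs hτ k
      _ ≤ exp (∑ k : Fin d, Λ k 1 ^ τ * H) :=
          Real.prod_one_add_le_exp_sum _ fun k => mul_nonneg (Real.rpow_nonneg (hP.nonneg _ _) _) hH
      _ ≤ exp (H * ∑' k, Λ k 1 ^ τ) := by
          rw [exp_le_exp, ← Finset.sum_mul, mul_comm,
            Fin.sum_univ_eq_sum_range (fun k => Λ k 1 ^ τ) d]
          exact mul_le_mul_of_nonneg_left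
            (hsum.sum_le_tsum _ fun k _ => Real.rpow_nonneg (hP.nonneg _ _) _) hH
  have hε2 : (ε ^ 2) ^ τ = ε ^ (2 * τ) := by
    rw [← Real.rpow_natCast, ← Real.rpow_mul hε.le]
    norm_num
  rw [Real.rpow_neg hε.le, ← div_eq_mul_inv, le_div_iff₀ (by positivity), ← hε2]
  exact (hP.infoCount_mul_rpow_le hτs hτ d hε).trans hprod

theorem isSPT_of_isPT (hPT : IsPT Λ) : IsSPT Λ := by
  obtain ⟨τs, hτs⟩ := hP.cond3
  obtain ⟨τ₁, hsum⟩ := hP.exists_summable_rpow_second_of_isPT hPT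
  have hτ : τs ≤ max τs τ₁ := le_max_left _ _
  exact ⟨_, 2 * max τs τ₁, (exp_pos _).le, by linarith [hτs.1],
    fun d _ ε hε => hP.infoCount_le_exp_mul_rpow hτs hτ (hsum _ (le_max_right _ _)) d hε.1⟩

end PropertyP

theorem IsSPT.isPT {Λ : ℕ → ℕ → ℝ} (h : IsSPT Λ) : IsPT Λ := by
  obtain ⟨C, p, hC, hp, hbound⟩ := h
  exact ⟨C, p, 0, hC, hp, le_rfl, fun d hd ε hε => by simpa using hbound d hd ε hε⟩

/-- Under Property (P), strong polynomial tractability is equivalent to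
polynomial tractability. -/
theorem spt_iff_pt (Λ : ℕ → ℕ → ℝ) (hP : PropertyP Λ) :
    IsSPT Λ ↔ IsPT Λ :=
  ⟨IsSPT.isPT, hP.isSPT_of_isPT⟩
end

section
/- Let the problem have Property (P). Since (h_k) is nonincreasing, the limit B := lim_{d→∞} ln(h_d^{-1}) exists in [0,∞]. The problem is quasi-polynomially tractable if and only if B > 0, which is equivalent to the condition that h_k is not identically equal to 1. -/
/-!
Since `ln h_k⁻¹` is nondecreasing, `B` is its supremum, so `B > 0` iff some `h_k < 1`.
If every `h_k = 1`, the multi-indices with entries in `{1, 2}` already give `n(1/2, d) ≥ 2^d`,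
which no quasi-polynomial bound allows. Conversely, if `h_{k₀} < 1` then `h_k ≤ h_{k₀}` for
`k ≥ k₀`, and Chebyshev's inequality for the counting measure on `ℕ^d` gives, for `τ' ≥ τ`,
`n(ε,d) ≤ ε^{-2τ'} ∏_{k ≤ d} ∑_j λ(k,j)^{τ'} ≤ ε^{-2τ'} exp(H(1,τ) ∑_{k ≤ d} h_k^{τ'})`.
The choice `τ' = s (1 + ln d)` with `s` large makes `h_k^{τ'} ≤ 1/(d H(1,τ))` for `k ≥ k₀`,
so the exponential stays bounded while `ε^{-2τ'} = exp(2 s (1 + ln d) ln ε⁻¹)`.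
-/

open Filter Real Set

open scoped ENNReal Topology

theorem ENNReal.tsum_pi_fin_prod {α : Type*} {d : ℕ} (f : Fin d → α → ℝ≥0∞) :
    ∑' j : Fin d → α, ∏ k, f k (j k) = ∏ k, ∑' a, f k a := by
  induction d with
  | zero => simp
  | succ d ih =>
    rw [← (Fin.consEquiv fun _ => α).tsum_eq, ENNReal.tsum_prod']
    simp only [Fin.consEquiv_apply, Fin.prod_univ_succ, Fin.cons_zero, Fin.cons_succ,
      ENNReal.tsum_mul_left, ih, ENNReal.tsum_mul_right]

theorem Set.encard_le_tsum_of_one_le {α : Type*} {s : Set α} {w : α → ℝ≥0∞}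
    (h : ∀ x ∈ s, 1 ≤ w x) : (s.encard : ℝ≥0∞) ≤ ∑' x, w x :=
  calc (s.encard : ℝ≥0∞) = ∑' _ : s, 1 := (ENNReal.tsum_set_one s).symm
    _ ≤ ∑' x : s, w x := ENNReal.tsum_le_tsum fun x => h x x.2
    _ ≤ ∑' x, w x := ENNReal.tsum_comp_le_tsum_of_injective Subtype.val_injective w

theorem encard_setOf_lt_prod_le {Λ : ℕ → ℕ → ℝ} (hΛ : ∀ k j, 0 ≤ Λ k j) {d : ℕ} {ε τ : ℝ}
    (hε : 0 < ε) (hτ : 0 < τ) :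
    ({j : Fin d → ℕ | ε ^ 2 < ∏ k : Fin d, Λ k (j k)}.encard : ℝ≥0∞) ≤
      ENNReal.ofReal (ε ^ (-(2 * τ))) * ∏ k : Fin d, ∑' n, ENNReal.ofReal (Λ k n ^ τ) := by
  rw [← ENNReal.tsum_pi_fin_prod, ← ENNReal.tsum_mul_left]
  refine Set.encard_le_tsum_of_one_le fun j hj => ?_
  have hpow : ε ^ (-(2 * τ)) = ((ε ^ 2) ^ τ)⁻¹ := by
    rw [← Real.rpow_natCast, ← Real.rpow_mul hε.le, ← Real.rpow_neg hε.le]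
    norm_num
  rw [← ENNReal.ofReal_prod_of_nonneg fun k _ => Real.rpow_nonneg (hΛ _ _) τ,
    ← ENNReal.ofReal_mul (by positivity), ← ENNReal.ofReal_one,
    Real.finsetProd_rpow _ _ (fun k _ => hΛ _ _), hpow]
  refine ENNReal.ofReal_le_ofReal ((le_inv_mul_iff₀ (by positivity)).2 ?_)
  rw [mul_one]
  exact Real.rpow_le_rpow (by positivity) (le_of_lt hj) hτ.le

theorem tsum_ofReal_rpow_le {l : ℕ → ℝ} (hnn : ∀ n, 0 ≤ l n) (hanti : Antitone l)
    (h0 : l 0 = 1) (h1 : 0 < l 1) {τ τ' : ℝ} (hτ : 0 ≤ τ) (hττ' : τ ≤ τ')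
    (hsum : Summable fun j => (l (j + 1) / l 1) ^ τ) :
    ∑' n, ENNReal.ofReal (l n ^ τ') ≤
      ENNReal.ofReal (1 + l 1 ^ τ' * ∑' j, (l (j + 1) / l 1) ^ τ) := by
  have hratio : ∀ n, l (n + 1) ^ τ' ≤ l 1 ^ τ' * (l (n + 1) / l 1) ^ τ := fun n => by
    have hr0 : 0 ≤ l (n + 1) / l 1 := div_nonneg (hnn _) h1.le
    have hr1 : l (n + 1) / l 1 ≤ 1 := div_le_one_of_le₀ (hanti (Nat.le_add_left 1 n)) h1.le
    calc l (n + 1) ^ τ' = l 1 ^ τ' * (l (n + 1) / l 1) ^ τ' := by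
          rw [Real.div_rpow (hnn _) h1.le, mul_div_cancel₀ _ (Real.rpow_pos_of_pos h1 τ').ne']
      _ ≤ l 1 ^ τ' * (l (n + 1) / l 1) ^ τ :=
          mul_le_mul_of_nonneg_left (Real.rpow_le_rpow_of_exponent_ge' hr0 hr1 hτ hττ')
            (by positivity)
  have hnonneg : ∀ n, 0 ≤ l 1 ^ τ' * (l (n + 1) / l 1) ^ τ := fun n => by
    have := hnn (n + 1); positivity
  rw [tsum_eq_zero_add' ENNReal.summable, h0, Real.one_rpow, ← tsum_mul_left,
    ENNReal.ofReal_add zero_le_one (tsum_nonneg hnonneg), ENNReal.ofReal_one,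
    ENNReal.ofReal_tsum_of_nonneg hnonneg (hsum.mul_left _)]
  gcongr with n
  exact hratio n

theorem sum_range_le_of_le_one_of_le {f : ℕ → ℝ} {k₀ : ℕ} {c : ℝ} (h1 : ∀ k, f k ≤ 1)
    (hc : ∀ k, k₀ ≤ k → f k ≤ c) (hc0 : 0 ≤ c) (d : ℕ) :
    ∑ k ∈ Finset.range d, f k ≤ k₀ + d * c := by
  rw [← Finset.sum_filter_add_sum_filter_not (Finset.range d) (· < k₀)]
  gcongr ?_ + ?_
  · calc ∑ k ∈ (Finset.range d).filter (· < k₀), f k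
        ≤ ((Finset.range d).filter (· < k₀)).card • (1 : ℝ) :=
          Finset.sum_le_card_nsmul _ _ _ fun k _ => h1 k
      _ ≤ k₀ := by
          rw [nsmul_one, Nat.cast_le]
          simpa using Finset.card_le_card fun k hk =>
            Finset.mem_range.2 (Finset.mem_filter.1 hk).2
  · calc ∑ k ∈ (Finset.range d).filter (¬ · < k₀), f k
        ≤ ((Finset.range d).filter (¬ · < k₀)).card • c :=
          Finset.sum_le_card_nsmul _ _ _ fun k hk => hc k (not_lt.1 (Finset.mem_filter.1 hk).2)
      _ ≤ d * c := by
          rw [nsmul_eq_mul]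
          gcongr
          simpa using Finset.card_filter_le (Finset.range d) _

theorem eventually_mul_exp_lt_two_pow (C t : ℝ) :
    ∀ᶠ d : ℕ in atTop, C * exp (t * (1 + log d)) < 2 ^ d := by
  have hlim : Tendsto (fun d : ℕ => C * exp t * ((d : ℝ) ^ t * exp (-log 2 * d)))
      atTop (𝓝 0) := by
    simpa using ((tendsto_rpow_mul_exp_neg_mul_atTop_nhds_zero t (log 2)
      (log_pos one_lt_two)).comp tendsto_natCast_atTop_atTop).const_mul (C * exp t)
  filter_upwards [hlim.eventually_lt_const one_pos, eventually_gt_atTop 0] with d hd hd0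
  have hcancel : exp (-log 2 * d) * 2 ^ d = 1 := by
    rw [← rpow_natCast, rpow_def_of_pos two_pos, ← exp_add, neg_mul, neg_add_cancel, exp_zero]
  have hexp : exp (t * (1 + log d)) = exp t * (d : ℝ) ^ t := by
    rw [rpow_def_of_pos (by positivity), ← exp_add]; ring_nf
  calc C * exp (t * (1 + log d))
      = C * exp t * ((d : ℝ) ^ t * exp (-log 2 * d)) * 2 ^ d := by
        rw [hexp]; linear_combination (-(C * exp t * d ^ t)) * hcancel
    _ < 1 * 2 ^ d := by gcongr
    _ = 2 ^ d := one_mul _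

theorem limsup_log_inv_pos_iff {h : ℕ → ℝ} (hanti : Antitone h) (hpos : ∀ k, 0 < h k) :
    0 < limsup (fun k => (log (h k)⁻¹ : EReal)) atTop ↔ ∃ k, h k < 1 := by
  have hmono : Monotone fun k => (log (h k)⁻¹ : EReal) := fun i j hij =>
    EReal.coe_le_coe_iff.2 (log_le_log (inv_pos.2 (hpos i)) (inv_anti₀ (hpos j) (hanti hij)))
  rw [(tendsto_atTop_iSup hmono).limsup_eq, lt_iSup_iff]
  refine exists_congr fun k => ?_
  rw [EReal.coe_pos, log_inv, neg_pos, log_neg_iff (hpos k)]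

theorem rpow_le_inv_of_log_le {h y c : ℝ} (hh : 0 < h) (hc : 0 < c)
    (hy : log c ≤ y * log h⁻¹) : h ^ y ≤ c⁻¹ := by
  rw [log_inv] at hy
  rw [rpow_def_of_pos hh, ← exp_log hc, ← exp_neg]
  exact exp_le_exp.2 (by linarith)

/-- `H(k+1, τ)` in the paper's 1-based indexing. -/
noncomputable def ratioSum (Λ : ℕ → ℕ → ℝ) (k : ℕ) (τ : ℝ) : ℝ :=
  ∑' j : ℕ, (Λ k (j + 1) / Λ k 1) ^ τ

namespace PropertyP

variable {Λ : ℕ → ℕ → ℝ} {τ τ' : ℝ}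

theorem second_le_one (hP : PropertyP Λ) (k : ℕ) : Λ k 1 ≤ 1 :=
  hP.first k ▸ hP.anti k zero_le_one

theorem one_le_ratioSum (hP : PropertyP Λ) (hc : Cond3 Λ τ) : 1 ≤ ratioSum Λ 0 τ :=
  calc 1 = (Λ 0 (0 + 1) / Λ 0 1) ^ τ := by
        rw [zero_add, div_self (hP.second_pos 0).ne', one_rpow]
    _ ≤ ratioSum Λ 0 τ := (hc.2.1 0).le_tsum 0 fun j _ =>
        rpow_nonneg (div_nonneg (hP.nonneg _ _) (hP.second_pos _).le) τ

theorem tsum_ofReal_rpow_le_exp (hP : PropertyP Λ) (hc : Cond3 Λ τ) (hττ' : τ ≤ τ') (k : ℕ) :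
    ∑' n, ENNReal.ofReal (Λ k n ^ τ') ≤ ENNReal.ofReal (exp (Λ k 1 ^ τ' * ratioSum Λ 0 τ)) := by
  refine (tsum_ofReal_rpow_le (hP.nonneg k) (hP.anti k) (hP.first k) (hP.second_pos k) hc.1.le
    hττ' (hc.2.1 k)).trans (ENNReal.ofReal_le_ofReal ?_)
  have hH : ratioSum Λ k τ ≤ ratioSum Λ 0 τ := hc.2.2 k
  have := hP.second_pos k
  calc 1 + Λ k 1 ^ τ' * ratioSum Λ k τ ≤ Λ k 1 ^ τ' * ratioSum Λ 0 τ + 1 := by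
        rw [add_comm]; gcongr
    _ ≤ exp (Λ k 1 ^ τ' * ratioSum Λ 0 τ) := add_one_le_exp _

theorem encard_setOf_lt_prod_le_exp (hP : PropertyP Λ) (hc : Cond3 Λ τ) (hττ' : τ ≤ τ') (d : ℕ)
    {ε : ℝ} (hε : 0 < ε) :
    ({j : Fin d → ℕ | ε ^ 2 < ∏ k : Fin d, Λ k (j k)}.encard : ℝ≥0∞) ≤
      ENNReal.ofReal (ε ^ (-(2 * τ')) *
        exp (ratioSum Λ 0 τ * ∑ k ∈ Finset.range d, Λ k 1 ^ τ')) :=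
  calc _ ≤ ENNReal.ofReal (ε ^ (-(2 * τ'))) * ∏ k : Fin d, ∑' n, ENNReal.ofReal (Λ k n ^ τ') :=
        encard_setOf_lt_prod_le hP.nonneg hε (hc.1.trans_le hττ')
    _ ≤ ENNReal.ofReal (ε ^ (-(2 * τ'))) *
          ∏ k : Fin d, ENNReal.ofReal (exp (Λ k 1 ^ τ' * ratioSum Λ 0 τ)) := by
        gcongr with k
        exact hP.tsum_ofReal_rpow_le_exp hc hττ' k
    _ = _ := by
        rw [← ENNReal.ofReal_prod_of_nonneg fun _ _ => (exp_pos _).le, ← exp_sum,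
          ← ENNReal.ofReal_mul (by positivity),
          Fin.sum_univ_eq_sum_range (fun k => Λ k 1 ^ τ' * ratioSum Λ 0 τ), Finset.mul_sum]
        simp_rw [mul_comm]

theorem infoCount_le (hP : PropertyP Λ) (hc : Cond3 Λ τ) (hττ' : τ ≤ τ') (d : ℕ) {ε : ℝ}
    (hε : 0 < ε) :
    (infoCount Λ d ε : ℝ) ≤
      ε ^ (-(2 * τ')) * exp (ratioSum Λ 0 τ * ∑ k ∈ Finset.range d, Λ k 1 ^ τ') := by
  rw [← ENNReal.ofReal_le_ofReal_iff (by positivity), ENNReal.ofReal_natCast, infoCount,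
    Nat.card_coe_set_eq, ← ENat.toENNReal_coe]
  exact (ENat.toENNReal_le.2 (Set.ncard_le_encard _)).trans
    (hP.encard_setOf_lt_prod_le_exp hc hττ' d hε)

theorem finite_setOf_lt_prod (hP : PropertyP Λ) (d : ℕ) {ε : ℝ} (hε : 0 < ε) :
    {j : Fin d → ℕ | ε ^ 2 < ∏ k : Fin d, Λ k (j k)}.Finite := by
  obtain ⟨τ, hc⟩ := hP.cond3
  rw [← Set.encard_lt_top_iff, ← ENat.toENNReal_lt_top]
  exact (hP.encard_setOf_lt_prod_le_exp hc le_rfl d hε).trans_lt ENNReal.ofReal_lt_top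

theorem two_pow_le_infoCount (hP : PropertyP Λ) (hall : ∀ k, Λ k 1 = 1) (d : ℕ) {ε : ℝ}
    (hε : ε ∈ Ioo 0 1) : 2 ^ d ≤ infoCount Λ d ε := by
  set S := {j : Fin d → ℕ | ε ^ 2 < ∏ k : Fin d, Λ k (j k)}
  have hone : ∀ k (i : Fin 2), Λ k i = 1 := fun k i => by
    fin_cases i
    exacts [hP.first k, hall k]
  set g : (Fin d → Fin 2) → Fin d → ℕ := (Fin.val ∘ ·)
  have hsub : range g ⊆ S := by
    rintro _ ⟨j, rfl⟩
    simpa only [S, g, mem_ofPred_eq, Function.comp_apply, hone, Finset.prod_const_one]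
      using pow_lt_one₀ hε.1.le hε.2 two_ne_zero
  calc 2 ^ d = (range g).ncard := by
        rw [ncard_range_of_injective Fin.val_injective.comp_left]; simp
    _ ≤ S.ncard := ncard_le_ncard hsub (hP.finite_setOf_lt_prod d hε.1)
    _ = infoCount Λ d ε := (Nat.card_coe_set_eq S).symm

theorem not_isQPT_of_forall_eq_one (hP : PropertyP Λ) (hall : ∀ k, Λ k 1 = 1) : ¬ IsQPT Λ := by
  rintro ⟨C, t, -, -, hbound⟩
  obtain ⟨d, hlt, hd⟩ :=
    ((eventually_mul_exp_lt_two_pow C (t * (1 + log 2))).and (eventually_ge_atTop 1)).exists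
  have hhalf : (1 / 2 : ℝ) ∈ Ioo 0 1 := by norm_num
  have hup := hbound d hd _ hhalf
  have hlow : (2 : ℝ) ^ d ≤ infoCount Λ d (1 / 2) := by
    exact_mod_cast hP.two_pow_le_infoCount hall d hhalf
  rw [one_div, inv_inv, mul_right_comm] at hup
  linarith

theorem mul_sum_rpow_le (hP : PropertyP Λ) {k₀ d : ℕ} {H : ℝ} (hH : 0 < H) (hd : 0 < d)
    (hτ' : 0 ≤ τ') (hlog : log (H * d) ≤ τ' * log (Λ k₀ 1)⁻¹) :
    H * ∑ k ∈ Finset.range d, Λ k 1 ^ τ' ≤ k₀ * H + 1 := by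
  have htail : Λ k₀ 1 ^ τ' ≤ (H * d)⁻¹ :=
    rpow_le_inv_of_log_le (hP.second_pos k₀) (by positivity) hlog
  calc H * ∑ k ∈ Finset.range d, Λ k 1 ^ τ' ≤ H * (k₀ + d * (H * d)⁻¹) := by
        gcongr
        exact sum_range_le_of_le_one_of_le
          (fun k => rpow_le_one (hP.second_pos k).le (hP.second_le_one k) hτ')
          (fun k hk => (rpow_le_rpow (hP.second_pos k).le (hP.h_anti hk) hτ').trans htail)
          (by positivity) d
    _ = k₀ * H + 1 := by field_simp

theorem isQPT_of_lt_one (hP : PropertyP Λ) {k₀ : ℕ} (hk₀ : Λ k₀ 1 < 1) : IsQPT Λ := by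
  obtain ⟨τ, hc⟩ := hP.cond3
  set H := ratioSum Λ 0 τ
  have hH1 : 1 ≤ H := hP.one_le_ratioSum hc
  have hH0 : 0 < H := one_pos.trans_le hH1
  have hH : 0 ≤ log H := log_nonneg hH1
  set a := log (Λ k₀ 1)⁻¹
  have ha : 0 < a := log_pos ((one_lt_inv₀ (hP.second_pos k₀)).2 hk₀)
  have hτ := hc.1
  set s := τ + (1 + log H) / a
  have hs : 1 + log H ≤ (s - τ) * a := by rw [← div_le_iff₀ ha]; simp [s]
  refine ⟨exp (k₀ * H + 1), 2 * s, exp_pos _, by positivity, fun d hd ε hε => ?_⟩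
  have hd0 : (0 : ℝ) < d := by exact_mod_cast hd
  have hD := log_nonneg (Nat.one_le_cast.2 hd)
  set τ' := s * (1 + log d)
  have hττ' : τ ≤ τ' := by nlinarith [div_nonneg (by positivity : 0 ≤ 1 + log H) ha.le]
  have hlog : log (H * d) ≤ τ' * a :=
    calc log (H * d) = log H + log d := log_mul (by positivity) hd0.ne'
      _ ≤ (1 + log H) * (1 + log d) := by nlinarith
      _ ≤ (s - τ) * a * (1 + log d) := by gcongr
      _ ≤ s * a * (1 + log d) := by gcongr; linarith
      _ = τ' * a := mul_right_comm _ _ _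
  have hεpow : ε ^ (-(2 * τ')) ≤ exp (2 * s * (1 + log d) * (1 + log ε⁻¹)) := by
    have hL := log_pos ((one_lt_inv₀ hε.1).2 hε.2)
    rw [rpow_def_of_pos hε.1, ← neg_neg (log ε), ← log_inv]
    exact exp_le_exp.2 (by nlinarith)
  calc (infoCount Λ d ε : ℝ) ≤ ε ^ (-(2 * τ')) * exp (H * ∑ k ∈ Finset.range d, Λ k 1 ^ τ') :=
        hP.infoCount_le hc hττ' d hε.1
    _ ≤ exp (2 * s * (1 + log d) * (1 + log ε⁻¹)) * exp (k₀ * H + 1) := by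
        gcongr
        exact hP.mul_sum_rpow_le (by positivity) hd (hτ.le.trans hττ') hlog
    _ = _ := mul_comm _ _

end PropertyP

/-- Under Property (P), with `B = lim_{d→∞} ln(h_d⁻¹)` (which exists in `[0,∞]` by
monotonicity of `(h_k)`, and equals the limsup used here), the problem is
quasi-polynomially tractable iff `B > 0`, which holds iff `h_k` is not identically `1`. -/
theorem qpt_iff_B_pos (Λ : ℕ → ℕ → ℝ) (hP : PropertyP Λ) :
    (IsQPT Λ ↔
      0 < Filter.limsup (fun k : ℕ => (Real.log (Λ k 1)⁻¹ : EReal)) Filter.atTop) ∧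
    ((0 < Filter.limsup (fun k : ℕ => (Real.log (Λ k 1)⁻¹ : EReal)) Filter.atTop) ↔
      ¬ ∀ k : ℕ, Λ k 1 = 1) := by
  have hB := limsup_log_inv_pos_iff hP.h_anti hP.second_pos
  have hex : (∃ k, Λ k 1 < 1) ↔ ¬ ∀ k, Λ k 1 = 1 := by
    simpa only [not_forall] using exists_congr fun k => (hP.second_le_one k).lt_iff_ne
  refine ⟨?_, hB.trans hex⟩
  rw [hB]
  exact ⟨fun hqpt => hex.2 fun hall => hP.not_isQPT_of_forall_eq_one hall hqpt,
    fun ⟨_, hk⟩ => hP.isQPT_of_lt_one hk⟩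
end
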